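/- For every initial observation y_0 ∈ 𝒴, the finite-horizon optimal values converge to the optimal value function: lim_{T → ∞} J_0(y_0; T) = V_0(y_0). -/
import Mathlib


open Set Filter

noncomputable section

/-- Hausdorff distance built from an arbitrary distance function `η`,
`ℋ(A,B) = max{sup_{a∈A} inf_{b∈B} η a b, sup_{b∈B} inf_{a∈A} η a b}`. -/
def hausd {α : Type*} (η : α → α → ℝ) (A B : Set α) : ℝ :=
  max (sSup ((fun a => sInf ((fun b => η a b) '' B)) '' A))
      (sSup ((fun b => sInf ((fun a => η a b) '' A)) '' B))

/-- The time-invariant DP operator `𝒯` for general information states: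
`[𝒯Λ](s,z) = inf_u sup_{c,s'} (c + γ·Λ(s',γz) + ρ(c,s'|s,u)/z)`, the sup being over the
support of the cost distribution `ρ` (off the support `ρ = −∞`). -/
def DPop {Ss Uu : Type*} (γ : ℝ) (ρ : ℝ → Ss → Ss → Uu → EReal)
    (Λ : Ss → ℝ → ℝ) (s : Ss) (z : ℝ) : ℝ :=
  sInf (Set.range fun u : Uu => sSup ((fun p : ℝ × Ss =>
    p.1 + γ * Λ p.2 (γ * z) + (ρ p.1 p.2 s u).toReal / z) '' {p | ρ p.1 p.2 s u ≠ ⊥}))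

/-- Iterates `Λ^n = 𝒯^n Λ^0` starting from `Λ^0 ≡ 0`. -/
def DPopIter {Ss Uu : Type*} (γ : ℝ) (ρ : ℝ → Ss → Ss → Uu → EReal) : ℕ → Ss → ℝ → ℝ
  | 0 => fun _ _ => 0
  | (n+1) => DPop γ ρ (DPopIter γ ρ n)

/-- The law-dependent operator `𝒯(π)`. -/
def DPopLaw {Ss Uu : Type*} (γ : ℝ) (ρ : ℝ → Ss → Ss → Uu → EReal) (π : Ss → ℝ → Uu)
    (Λ : Ss → ℝ → ℝ) (s : Ss) (z : ℝ) : ℝ :=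
  sSup ((fun p : ℝ × Ss =>
    p.1 + γ * Λ p.2 (γ * z) + (ρ p.1 p.2 s (π s z)).toReal / z) '' {p | ρ p.1 p.2 s (π s z) ≠ ⊥})

/-- Iterates `𝒯(π)^n Λ^0` starting from `Λ^0 ≡ 0`. -/
def DPopLawIter {Ss Uu : Type*} (γ : ℝ) (ρ : ℝ → Ss → Ss → Uu → EReal) (π : Ss → ℝ → Uu) :
    ℕ → Ss → ℝ → ℝ
  | 0 => fun _ _ => 0
  | (n+1) => DPopLaw γ ρ π (DPopLawIter γ ρ π n)

/-- The time-invariant DP operator `𝒯̄` for problems with observable costs: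
`[𝒯̄Λ̄](s̄) = inf_u sup_{(c,s̄') ∈ F(s̄,u)} (c + γ·Λ̄(s̄'))` where `F s̄ u = [[C, S̄' | s̄, u]]`. -/
def DPopB {Sb Uu : Type*} (γ : ℝ) (F : Sb → Uu → Set (ℝ × Sb)) (Λ : Sb → ℝ) (s : Sb) : ℝ :=
  sInf (Set.range fun u : Uu => sSup ((fun p : ℝ × Sb => p.1 + γ * Λ p.2) '' F s u))

/-- Iterates `Λ̄^n = 𝒯̄^n Λ̄^0` starting from `Λ̄^0 ≡ 0`. -/
def DPopBIter {Sb Uu : Type*} (γ : ℝ) (F : Sb → Uu → Set (ℝ × Sb)) : ℕ → Sb → ℝ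
  | 0 => fun _ => 0
  | (n+1) => DPopB γ F (DPopBIter γ F n)

/-- The law-dependent observable-cost operator. -/
def DPopBLaw {Sb Uu : Type*} (γ : ℝ) (F : Sb → Uu → Set (ℝ × Sb)) (π : Sb → Uu)
    (Λ : Sb → ℝ) (s : Sb) : ℝ :=
  sSup ((fun p : ℝ × Sb => p.1 + γ * Λ p.2) '' F s (π s))

/-- `β_t(T)` error coefficients, fuel-indexed: `beta γ e k t = β_t(t+k)` with
`β_T(T) = γ^T·e` and `β_t(T) = β_{t+1}(T) + γ^t·e`. -/
def beta (γ e : ℝ) : ℕ → ℕ → ℝ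
  | 0, t => γ ^ t * e
  | (k+1), t => beta γ e k (t+1) + γ ^ t * e

/-- A partially observed non-stochastic input–output system with bounded costs:
disturbances `W_t ∈ 𝒲`, actions `U_t ∈ 𝒰`, observations `Y_0 = h_0(W_0)`,
`Y_{t+1} = h_{t+1}(W_{0:t}, U_{0:t})`, and costs `C_t = d_t(W_{0:t}, U_{0:t}) ∈ 𝒞 ⊆ [cmin, cmax] ⊂ ℝ≥0`,
with a discount factor `γ ∈ (0,1)`. -/
structure Sys where
  W : Type
  U : Type
  Y : Type
  [hW : Nonempty W]
  [hU : Nonempty U]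
  [hY : Nonempty Y]
  γ : ℝ
  cmin : ℝ
  cmax : ℝ
  h0 : W → Y
  h : (t : ℕ) → (Fin (t+1) → W) → (Fin (t+1) → U) → Y
  d : (t : ℕ) → (Fin (t+1) → W) → (Fin (t+1) → U) → ℝ
  hγ0 : 0 < γ
  hγ1 : γ < 1
  hcmin : 0 ≤ cmin
  hcost : ∀ t ω υ, d t ω υ ∈ Set.Icc cmin cmax

attribute [instance] Sys.hW Sys.hU Sys.hY

namespace Sys

variable (S : Sys)

/-- `a^max = c^max/(1-γ)`. -/
def amax : ℝ := S.cmax / (1 - S.γ)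

/-- Memory space at time `t`: `M_t = (Y_{0:t}, U_{0:t-1})`. -/
abbrev Mem (t : ℕ) : Type := (Fin (t+1) → S.Y) × (Fin t → S.U)

/-- Control strategies `g = (g_0, g_1, …)`, `U_t = g_t(M_t)`. -/
abbrev Strat : Type := (t : ℕ) → S.Mem t → S.U

/-- The memory realization at time `0` generated by an initial observation `y_0`. -/
def mem0 (y : S.Y) : S.Mem 0 := (fun _ => y, Fin.elim0)

/-- Open-loop observation `Y_s` generated by disturbances `ω` and actions `u_{0:s-1}`. -/
def oy (ω : ℕ → S.W) : (s : ℕ) → (Fin s → S.U) → S.Y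
  | 0, _ => S.h0 (ω 0)
  | (t+1), υ => S.h t (fun i : Fin (t+1) => ω i) υ

/-- Open-loop cost `C_t` generated by disturbances `ω` and actions `u_{0:t}`. -/
def oc (ω : ℕ → S.W) (t : ℕ) (υ : Fin (t+1) → S.U) : ℝ :=
  S.d t (fun i : Fin (t+1) => ω i) υ

/-- Open-loop accrued cost `A_t = Σ_{ℓ<t} γ^ℓ C_ℓ`. -/
def oA (ω : ℕ → S.W) (t : ℕ) (υ : Fin t → S.U) : ℝ :=
  ∑ ℓ : Fin t, S.γ ^ (ℓ : ℕ) *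
    S.oc ω ℓ (fun j : Fin ((ℓ : ℕ) + 1) => υ ⟨j, by have := j.isLt; have := ℓ.isLt; omega⟩)

/-- Open-loop memory at time `t` generated by disturbances `ω` and actions `u_{0:t-1}`. -/
def omem (ω : ℕ → S.W) (t : ℕ) (υ : Fin t → S.U) : S.Mem t :=
  (fun i : Fin (t+1) =>
    S.oy ω i (fun j : Fin (i : ℕ) => υ ⟨j, by have := j.isLt; have := i.isLt; omega⟩), υ)

/-- Disturbance realizations consistent with the memory realization `m_t`. -/
def consistent (t : ℕ) (m : S.Mem t) : Set (ℕ → S.W) := {ω | S.omem ω t m.2 = m}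

/-- `[[A_t | m_t]]`, the conditional range of the accrued cost. -/
def Arange (t : ℕ) (m : S.Mem t) : Set ℝ :=
  (fun ω => S.oA ω t m.2) '' S.consistent t m

/-- Closed-loop memory `M_t` generated by strategy `g` and disturbances `ω`. -/
def memOf (g : S.Strat) (ω : ℕ → S.W) : (t : ℕ) → S.Mem t
  | 0 => (fun _ => S.h0 (ω 0), Fin.elim0)
  | (t+1) =>
    let m := memOf g ω t
    let us : Fin (t+1) → S.U := Fin.snoc m.2 (g t m)
    (Fin.snoc m.1 (S.h t (fun i : Fin (t+1) => ω i) us), us)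

/-- Closed-loop action `U_t = g_t(M_t)`. -/
def act (g : S.Strat) (ω : ℕ → S.W) (t : ℕ) : S.U := g t (S.memOf g ω t)

/-- Closed-loop cost `C_t`. -/
def ccost (g : S.Strat) (ω : ℕ → S.W) (t : ℕ) : ℝ :=
  S.d t (fun i : Fin (t+1) => ω i) (fun i : Fin (t+1) => S.act g ω i)

/-- Closed-loop accrued cost `A_t = Σ_{ℓ<t} γ^ℓ C_ℓ`. -/
def cA (g : S.Strat) (ω : ℕ → S.W) (t : ℕ) : ℝ :=
  ∑ ℓ ∈ Finset.range t, S.γ ^ ℓ * S.ccost g ω ℓ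

/-- Closed-loop cost-to-go `C_t^∞ = Σ_{ℓ≥t} γ^{ℓ-t} C_ℓ`. -/
def cCinf (g : S.Strat) (ω : ℕ → S.W) (t : ℕ) : ℝ :=
  ∑' k : ℕ, S.γ ^ k * S.ccost g ω (t + k)

/-- Strategy value function
`V_t^g(m_t) = sup_{(a,c^∞) ∈ [[A_t, C_t^∞ | m_t]]^g} (a + γ^t c^∞)`. -/
def V (g : S.Strat) (t : ℕ) (m : S.Mem t) : ℝ :=
  sSup ((fun ω => S.cA g ω t + S.γ ^ t * S.cCinf g ω t) '' {ω | S.memOf g ω t = m})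

/-- Optimal value function `V_t(m_t) = inf_g V_t^g(m_t)`
(the infimum over strategies consistent with the realization `m_t`). -/
def Vopt (t : ℕ) (m : S.Mem t) : ℝ :=
  sInf ((fun g => S.V g t m) '' {g : S.Strat | ∃ ω, S.memOf g ω t = m})

/-- Strategy-dependent finite-horizon function, fuel-indexed:
`Jg g n t m = J_t^g(m_t; t+n)` with `J_T^g(m_T;T) = sup_{[[A_T,C_T|m_T]]^g}(a_T + γ^T c_T)` and
`J_t^g(m_t;T) = sup_{m_{t+1} ∈ [[M_{t+1}|m_t]]^g} J_{t+1}^g(m_{t+1};T)`. -/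
def Jg (g : S.Strat) : ℕ → (t : ℕ) → S.Mem t → ℝ
  | 0, t, m => sSup ((fun ω => S.cA g ω t + S.γ ^ t * S.ccost g ω t) '' {ω | S.memOf g ω t = m})
  | (n+1), t, m =>
    sSup ((fun ω => Jg g n (t+1) (S.memOf g ω (t+1))) '' {ω | S.memOf g ω t = m})

/-- Optimal finite-horizon function, fuel-indexed: `Jopt n t m = J_t(m_t; t+n)` with
`J_T(m_T;T) = inf_{u_T} sup_{[[A_T,C_T|m_T,u_T]]}(a_T + γ^T c_T)` and
`J_t(m_t;T) = inf_{u_t} sup_{m_{t+1} ∈ [[M_{t+1}|m_t,u_t]]} J_{t+1}(m_{t+1};T)`. -/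
def Jopt : ℕ → (t : ℕ) → S.Mem t → ℝ
  | 0, t, m => sInf (Set.range fun u : S.U =>
      sSup ((fun ω => S.oA ω t m.2 + S.γ ^ t * S.oc ω t (Fin.snoc m.2 u)) '' S.consistent t m))
  | (n+1), t, m => sInf (Set.range fun u : S.U =>
      sSup ((fun ω => Jopt n (t+1) (S.omem ω (t+1) (Fin.snoc m.2 u))) '' S.consistent t m))

/-- The conditional accrued distribution `r_t((c,s) | m_t, u_t)` of the pair
`(C_t, S_{t+1})` where `S_{t+1} = σ_{t+1}(M_{t+1})`:
`r_t(x|y) = sup_{a ∈ [0,a^max]}(a + 𝕀(x,a|y)) − sup_{a ∈ [0,a^max]}(a + 𝕀(a|y))` in `ℝ ∪ {−∞}`. -/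
def rcs {Ss : Type*} (σ : (t : ℕ) → S.Mem t → Ss) (t : ℕ) (c : ℝ) (s : Ss)
    (m : S.Mem t) (u : S.U) : EReal :=
  sSup ((fun a : ℝ => (a : EReal)) '' {a | a ∈ Set.Icc 0 S.amax ∧ ∃ ω ∈ S.consistent t m,
      S.oc ω t (Fin.snoc m.2 u) = c ∧ σ (t+1) (S.omem ω (t+1) (Fin.snoc m.2 u)) = s ∧
      S.oA ω t m.2 = a}) -
  sSup ((fun a : ℝ => (a : EReal)) '' {a | a ∈ Set.Icc 0 S.amax ∧ ∃ ω ∈ S.consistent t m,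
      S.oA ω t m.2 = a})

/-! ### Observable costs -/

/-- Memory space with observable costs: `M_t = (Y_{0:t}, C_{0:t-1}, U_{0:t-1})`. -/
abbrev MemO (t : ℕ) : Type := (Fin (t+1) → S.Y) × (Fin t → ℝ) × (Fin t → S.U)

/-- Strategies for the observable-cost problem. -/
abbrev StratO : Type := (t : ℕ) → S.MemO t → S.U

/-- The observable-cost memory realization at time `0` from an initial observation. -/
def memO0 (y : S.Y) : S.MemO 0 := (fun _ => y, Fin.elim0, Fin.elim0)

/-- Open-loop observable-cost memory generated by `ω` and actions `u_{0:t-1}`. -/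
def omemO (ω : ℕ → S.W) (t : ℕ) (υ : Fin t → S.U) : S.MemO t :=
  (fun i : Fin (t+1) =>
      S.oy ω i (fun j : Fin (i : ℕ) => υ ⟨j, by have := j.isLt; have := i.isLt; omega⟩),
   fun ℓ : Fin t =>
      S.oc ω ℓ (fun j : Fin ((ℓ : ℕ) + 1) => υ ⟨j, by have := j.isLt; have := ℓ.isLt; omega⟩),
   υ)

/-- Disturbances consistent with an observable-cost memory realization. -/
def consistentO (t : ℕ) (m : S.MemO t) : Set (ℕ → S.W) := {ω | S.omemO ω t m.2.2 = m}

/-- `[[A_t | m_t]]` for the observable-cost problem. -/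
def ArangeO (t : ℕ) (m : S.MemO t) : Set ℝ :=
  (fun ω => S.oA ω t m.2.2) '' S.consistentO t m

/-- Closed-loop observable-cost memory. -/
def memOfO (g : S.StratO) (ω : ℕ → S.W) : (t : ℕ) → S.MemO t
  | 0 => (fun _ => S.h0 (ω 0), Fin.elim0, Fin.elim0)
  | (t+1) =>
    let m := memOfO g ω t
    let us : Fin (t+1) → S.U := Fin.snoc m.2.2 (g t m)
    (Fin.snoc m.1 (S.h t (fun i : Fin (t+1) => ω i) us),
     Fin.snoc m.2.1 (S.d t (fun i : Fin (t+1) => ω i) us), us)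

/-- Closed-loop action for the observable-cost problem. -/
def actO (g : S.StratO) (ω : ℕ → S.W) (t : ℕ) : S.U := g t (S.memOfO g ω t)

/-- Closed-loop cost for the observable-cost problem. -/
def ccostO (g : S.StratO) (ω : ℕ → S.W) (t : ℕ) : ℝ :=
  S.d t (fun i : Fin (t+1) => ω i) (fun i : Fin (t+1) => S.actO g ω i)

/-- Closed-loop accrued cost for the observable-cost problem. -/
def cAO (g : S.StratO) (ω : ℕ → S.W) (t : ℕ) : ℝ :=
  ∑ ℓ ∈ Finset.range t, S.γ ^ ℓ * S.ccostO g ω ℓ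

/-- Closed-loop cost-to-go for the observable-cost problem. -/
def cCinfO (g : S.StratO) (ω : ℕ → S.W) (t : ℕ) : ℝ :=
  ∑' k : ℕ, S.γ ^ k * S.ccostO g ω (t + k)

/-- Strategy value function for the observable-cost problem. -/
def VO (g : S.StratO) (t : ℕ) (m : S.MemO t) : ℝ :=
  sSup ((fun ω => S.cAO g ω t + S.γ ^ t * S.cCinfO g ω t) '' {ω | S.memOfO g ω t = m})

/-- Optimal value function for the observable-cost problem. -/
def VoptO (t : ℕ) (m : S.MemO t) : ℝ :=
  sInf ((fun g => S.VO g t m) '' {g : S.StratO | ∃ ω, S.memOfO g ω t = m})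

/-- Optimal finite-horizon function for the observable-cost problem, fuel-indexed. -/
def JoptO : ℕ → (t : ℕ) → S.MemO t → ℝ
  | 0, t, m => sInf (Set.range fun u : S.U =>
      sSup ((fun ω => S.oA ω t m.2.2 + S.γ ^ t * S.oc ω t (Fin.snoc m.2.2 u)) ''
        S.consistentO t m))
  | (n+1), t, m => sInf (Set.range fun u : S.U =>
      sSup ((fun ω => JoptO n (t+1) (S.omemO ω (t+1) (Fin.snoc m.2.2 u))) '' S.consistentO t m))

/-- `[[C_t, S̄_{t+1} | m_t, u_t]]`: conditional range of the current cost and next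
(information-) state `S̄_{t+1} = σ̄_{t+1}(M_{t+1})` given the memory `m_t` and action `u_t`. -/
def CSrange {Sb : Type*} (σ : (t : ℕ) → S.MemO t → Sb) (t : ℕ) (m : S.MemO t) (u : S.U) :
    Set (ℝ × Sb) :=
  (fun ω => (S.oc ω t (Fin.snoc m.2.2 u), σ (t+1) (S.omemO ω (t+1) (Fin.snoc m.2.2 u)))) ''
    S.consistentO t m

/-- `[[C_t, Y_{t+1} | m_t, u_t]]`. -/
def CYrange (t : ℕ) (m : S.MemO t) (u : S.U) : Set (ℝ × S.Y) :=
  (fun ω => (S.oc ω t (Fin.snoc m.2.2 u), S.oy ω (t+1) (Fin.snoc m.2.2 u))) '' S.consistentO t m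

open Classical in
/-- Conditional indicator `𝕀((c_t, m_{t+1}) | m_t, u_t)` for the observable-cost problem. -/
def indObs (t : ℕ) (c : ℝ) (m' : S.MemO (t+1)) (m : S.MemO t) (u : S.U) : EReal :=
  if ∃ ω ∈ S.consistentO t m,
      S.oc ω t (Fin.snoc m.2.2 u) = c ∧ S.omemO ω (t+1) (Fin.snoc m.2.2 u) = m' then 0 else ⊥

/-- Conditional accrued distribution `r_t((c_t, m_{t+1}) | m_t, u_t)` for the
observable-cost problem. -/
def rObs (t : ℕ) (c : ℝ) (m' : S.MemO (t+1)) (m : S.MemO t) (u : S.U) : EReal :=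
  sSup ((fun a : ℝ => (a : EReal)) '' {a | a ∈ Set.Icc 0 S.amax ∧ ∃ ω ∈ S.consistentO t m,
      S.oc ω t (Fin.snoc m.2.2 u) = c ∧ S.omemO ω (t+1) (Fin.snoc m.2.2 u) = m' ∧
      S.oA ω t m.2.2 = a}) -
  sSup ((fun a : ℝ => (a : EReal)) '' {a | a ∈ Set.Icc 0 S.amax ∧ ∃ ω ∈ S.consistentO t m,
      S.oA ω t m.2.2 = a})

end Sys

namespace Sys
variable (S : Sys)

lemma cmax_nonneg : 0 ≤ S.cmax := by
  have := S.hcost 0 (fun _ => Classical.arbitrary S.W) (fun _ => Classical.arbitrary S.U)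
  exact S.hcmin.trans (this.1.trans this.2)

lemma one_sub_γ_pos : 0 < 1 - S.γ := by linarith [S.hγ1]

lemma amax_nonneg : 0 ≤ S.amax := div_nonneg S.cmax_nonneg S.one_sub_γ_pos.le

lemma memOf_eq_omem (g : S.Strat) (ω : ℕ → S.W) (t : ℕ) :
    S.memOf g ω t = S.omem ω t (fun i : Fin t => S.act g ω i) := by
  induction t with
  | zero =>
    refine Prod.ext ?_ (funext fun i => i.elim0)
    funext i
    have hi : i = ⟨0, Nat.zero_lt_one⟩ := Fin.ext (by omega)
    subst hi
    rfl
  | succ t ih =>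
    have hus : (Fin.snoc (S.memOf g ω t).2 (g t (S.memOf g ω t)) : Fin (t+1) → S.U)
        = fun i : Fin (t+1) => S.act g ω i := by
      funext i
      refine Fin.lastCases ?_ (fun j => ?_) i
      · rw [Fin.snoc_last]; rfl
      · rw [Fin.snoc_castSucc, ih]; rfl
    simp only [memOf]
    refine Prod.ext ?_ ?_
    · funext i
      dsimp only
      refine Fin.lastCases ?_ (fun j => ?_) i
      · rw [Fin.snoc_last, hus]
        rfl
      · rw [Fin.snoc_castSucc, ih]
        rfl
    · dsimp only
      rw [hus]
      rfl

lemma act_eq {g : S.Strat} {ω : ℕ → S.W} {t : ℕ} {m : S.Mem t}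
    (h : S.memOf g ω t = m) (i : Fin t) : S.act g ω i = m.2 i := by
  have := congrArg Prod.snd ((S.memOf_eq_omem g ω t).symm.trans h)
  exact congrFun this i

lemma actFun_eq {g : S.Strat} {ω : ℕ → S.W} {t : ℕ} {m : S.Mem t}
    (h : S.memOf g ω t = m) :
    (fun i : Fin (t+1) => S.act g ω i) = Fin.snoc m.2 (g t m) := by
  funext i
  refine Fin.lastCases ?_ (fun j => ?_) i
  · rw [Fin.snoc_last, ← h]; rfl
  · rw [Fin.snoc_castSucc, ← S.act_eq h j]; rfl

lemma memOf_succ {g : S.Strat} {ω : ℕ → S.W} {t : ℕ} {m : S.Mem t}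
    (h : S.memOf g ω t = m) :
    S.memOf g ω (t+1) = S.omem ω (t+1) (Fin.snoc m.2 (g t m)) := by
  rw [S.memOf_eq_omem g ω (t+1), ← S.actFun_eq h]

lemma mem_consistent_of_memOf {g : S.Strat} {ω : ℕ → S.W} {t : ℕ} {m : S.Mem t}
    (h : S.memOf g ω t = m) : ω ∈ S.consistent t m := by
  have h2 : m.2 = fun i : Fin t => S.act g ω i :=
    congrArg Prod.snd (h.symm.trans (S.memOf_eq_omem g ω t))
  show S.omem ω t m.2 = m
  rw [h2, ← S.memOf_eq_omem, h]

lemma self_mem_consistent (ω : ℕ → S.W) (t : ℕ) (υ : Fin t → S.U) :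
    ω ∈ S.consistent t (S.omem ω t υ) := rfl

end Sys
namespace Sys
variable (S : Sys)

/-- Truncation of a memory realization. -/
def mtrunc {t : ℕ} (m : S.Mem t) (s : ℕ) (h : s ≤ t) : S.Mem s :=
  (fun i => m.1 (Fin.castLE (by omega) i), fun i => m.2 (Fin.castLE h i))

lemma mtrunc_self {t : ℕ} (m : S.Mem t) : S.mtrunc m t le_rfl = m := by
  refine Prod.ext ?_ ?_ <;> funext i <;> simp [mtrunc]

lemma consistent_mtrunc {t : ℕ} {m : S.Mem t} {ω : ℕ → S.W}
    (hω : ω ∈ S.consistent t m) (s : ℕ) (h : s ≤ t) :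
    ω ∈ S.consistent s (S.mtrunc m s h) := by
  show S.omem ω s (S.mtrunc m s h).2 = S.mtrunc m s h
  refine Prod.ext ?_ rfl
  funext i
  have h1 := congrFun (congrArg Prod.fst hω) (Fin.castLE (by omega : t + 1 ≤ t + 1)
      ⟨(i : ℕ), by omega⟩)
  show S.oy ω (i : ℕ) _ = m.1 _
  have h2 : (S.omem ω t m.2).1 ⟨(i : ℕ), by omega⟩ = m.1 ⟨(i : ℕ), by omega⟩ := by
    exact congrFun (congrArg Prod.fst hω) ⟨(i : ℕ), by omega⟩
  refine Eq.trans ?_ h2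
  rfl

lemma replay {g : S.Strat} {t : ℕ} {m : S.Mem t}
    (hrep : ∀ s (hs : s < t), g s (S.mtrunc m s hs.le) = m.2 ⟨s, hs⟩)
    {ω : ℕ → S.W} (hω : ω ∈ S.consistent t m) :
    ∀ s (hs : s ≤ t), S.memOf g ω s = S.mtrunc m s hs := by
  intro s
  induction s with
  | zero =>
    intro hs
    refine Prod.ext ?_ (funext fun i => i.elim0)
    funext i
    have hi : i = ⟨0, Nat.zero_lt_one⟩ := Fin.ext (by omega)
    subst hi
    have h2 : (S.omem ω t m.2).1 ⟨0, by omega⟩ = m.1 ⟨0, by omega⟩ :=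
      congrFun (congrArg Prod.fst hω) ⟨0, by omega⟩
    exact h2
  | succ s ih =>
    intro hs
    have hss : s ≤ t := by omega
    have ihs := ih hss
    simp only [memOf]
    rw [ihs]
    have hact : g s (S.mtrunc m s hss) = m.2 ⟨s, by omega⟩ := hrep s (by omega)
    have hus : (Fin.snoc (S.mtrunc m s hss).2 (g s (S.mtrunc m s hss)) : Fin (s+1) → S.U)
        = (S.mtrunc m (s+1) hs).2 := by
      funext i
      refine Fin.lastCases ?_ (fun j => ?_) i
      · rw [Fin.snoc_last, hact]
        show m.2 _ = m.2 _
        congr 1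
      · rw [Fin.snoc_castSucc]
        show m.2 _ = m.2 _
        congr 1
    refine Prod.ext ?_ hus
    dsimp only
    funext i
    refine Fin.lastCases ?_ (fun j => ?_) i
    · rw [Fin.snoc_last, hus]
      -- goal: h s ω ((mtrunc m (s+1) hs).2) = (mtrunc m (s+1) hs).1 (last (s+1))
      have h2 : (S.omem ω t m.2).1 ⟨s+1, by omega⟩ = m.1 ⟨s+1, by omega⟩ :=
        congrFun (congrArg Prod.fst hω) ⟨s+1, by omega⟩
      refine Eq.trans ?_ h2
      rfl
    · rw [Fin.snoc_castSucc]
      show m.1 _ = m.1 _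
      congr 1

lemma memOf_mtrunc {g : S.Strat} {ω₀ : ℕ → S.W} {t : ℕ} {m : S.Mem t}
    (h : S.memOf g ω₀ t = m) (s : ℕ) (hs : s ≤ t) :
    S.memOf g ω₀ s = S.mtrunc m s hs := by
  have hcons : ω₀ ∈ S.consistent t m := S.mem_consistent_of_memOf h
  have h1 : S.memOf g ω₀ s = S.omem ω₀ s (fun i : Fin s => S.act g ω₀ i) :=
    S.memOf_eq_omem g ω₀ s
  have h2 : (fun i : Fin s => S.act g ω₀ (i : ℕ)) = (S.mtrunc m s hs).2 := by
    funext i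
    have := S.act_eq h (Fin.castLE hs i)
    exact this
  rw [h1, h2]
  exact S.consistent_mtrunc hcons s hs

lemma memOf_of_consistent {g : S.Strat} {ω₀ : ℕ → S.W} {t : ℕ} {m : S.Mem t}
    (h : S.memOf g ω₀ t = m) {ω : ℕ → S.W} (hω : ω ∈ S.consistent t m) :
    S.memOf g ω t = m := by
  have hrep : ∀ s (hs : s < t), g s (S.mtrunc m s hs.le) = m.2 ⟨s, hs⟩ := by
    intro s hs
    rw [← S.memOf_mtrunc h s hs.le]
    have := S.act_eq h ⟨s, hs⟩
    exact this
  have := S.replay hrep hω t le_rfl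
  rwa [S.mtrunc_self] at this

lemma memOf_zero_of_consistent {g : S.Strat} {m : S.Mem 0} {ω : ℕ → S.W}
    (hω : ω ∈ S.consistent 0 m) : S.memOf g ω 0 = m := by
  have hrep : ∀ s (hs : s < 0), g s (S.mtrunc m s hs.le) = m.2 ⟨s, hs⟩ := by
    intro s hs; omega
  have := S.replay hrep hω 0 le_rfl
  rwa [S.mtrunc_self] at this

lemma consistent_eq {g : S.Strat} {ω₀ : ℕ → S.W} {t : ℕ} {m : S.Mem t}
    (h : S.memOf g ω₀ t = m) :
    S.consistent t m = {ω | S.memOf g ω t = m} := by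
  ext ω
  exact ⟨fun hω => S.memOf_of_consistent h hω, fun hω => S.mem_consistent_of_memOf hω⟩

lemma memOf_agree {g : S.Strat} {t : ℕ} {ω ω' : ℕ → S.W}
    (h : S.memOf g ω (t+1) = S.memOf g ω' (t+1)) :
    S.memOf g ω t = S.memOf g ω' t := by
  have h1 := S.memOf_mtrunc (g := g) (ω₀ := ω) (m := S.memOf g ω (t+1)) rfl t (by omega)
  have h2 := S.memOf_mtrunc (g := g) (ω₀ := ω') (m := S.memOf g ω' (t+1)) rfl t (by omega)
  rw [h1, h2, h]

end Sys
namespace Sys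
variable (S : Sys)

lemma oc_mem (ω : ℕ → S.W) (t : ℕ) (υ : Fin (t+1) → S.U) :
    S.oc ω t υ ∈ Set.Icc S.cmin S.cmax := S.hcost t _ υ

lemma oc_nonneg (ω : ℕ → S.W) (t : ℕ) (υ : Fin (t+1) → S.U) : 0 ≤ S.oc ω t υ :=
  S.hcmin.trans (S.oc_mem ω t υ).1

lemma ccost_mem (g : S.Strat) (ω : ℕ → S.W) (t : ℕ) :
    S.ccost g ω t ∈ Set.Icc S.cmin S.cmax := S.hcost t _ _

lemma ccost_nonneg (g : S.Strat) (ω : ℕ → S.W) (t : ℕ) : 0 ≤ S.ccost g ω t :=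
  S.hcmin.trans (S.ccost_mem g ω t).1

lemma geom_sum_le_amax (n : ℕ) : ∑ ℓ ∈ Finset.range n, S.γ ^ ℓ * S.cmax ≤ S.amax := by
  rw [← Finset.sum_mul]
  have h1 : ∑ ℓ ∈ Finset.range n, S.γ ^ ℓ ≤ (1 - S.γ)⁻¹ := by
    have := Summable.sum_le_tsum (Finset.range n) (fun i _ => pow_nonneg S.hγ0.le i)
      (summable_geometric_of_lt_one S.hγ0.le S.hγ1)
    rwa [tsum_geometric_of_lt_one S.hγ0.le S.hγ1] at this
  calc (∑ ℓ ∈ Finset.range n, S.γ ^ ℓ) * S.cmax ≤ (1 - S.γ)⁻¹ * S.cmax :=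
        mul_le_mul_of_nonneg_right h1 S.cmax_nonneg
    _ = S.amax := by rw [amax]; ring

lemma oA_nonneg (ω : ℕ → S.W) (t : ℕ) (υ : Fin t → S.U) : 0 ≤ S.oA ω t υ :=
  Finset.sum_nonneg fun i _ => mul_nonneg (pow_nonneg S.hγ0.le _) (S.oc_nonneg ω _ _)

lemma oA_le (ω : ℕ → S.W) (t : ℕ) (υ : Fin t → S.U) :
    S.oA ω t υ ≤ ∑ ℓ ∈ Finset.range t, S.γ ^ ℓ * S.cmax := by
  rw [oA, Finset.sum_range fun ℓ => S.γ ^ ℓ * S.cmax]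
  exact Finset.sum_le_sum fun i _ => mul_le_mul_of_nonneg_left (S.oc_mem ω _ _).2
    (pow_nonneg S.hγ0.le _)

lemma oAoc_mem (ω : ℕ → S.W) (t : ℕ) (υ : Fin t → S.U) (υ' : Fin (t+1) → S.U) :
    S.oA ω t υ + S.γ ^ t * S.oc ω t υ' ∈ Set.Icc 0 S.amax := by
  constructor
  · exact add_nonneg (S.oA_nonneg ω t υ)
      (mul_nonneg (pow_nonneg S.hγ0.le _) (S.oc_nonneg ω t υ'))
  · calc S.oA ω t υ + S.γ ^ t * S.oc ω t υ'
        ≤ (∑ ℓ ∈ Finset.range t, S.γ ^ ℓ * S.cmax) + S.γ ^ t * S.cmax :=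
          add_le_add (S.oA_le ω t υ)
            (mul_le_mul_of_nonneg_left (S.oc_mem ω t υ').2 (pow_nonneg S.hγ0.le _))
      _ = ∑ ℓ ∈ Finset.range (t+1), S.γ ^ ℓ * S.cmax := (Finset.sum_range_succ _ _).symm
      _ ≤ S.amax := S.geom_sum_le_amax (t+1)

lemma summable_cCinf (g : S.Strat) (ω : ℕ → S.W) (t : ℕ) :
    Summable (fun k : ℕ => S.γ ^ k * S.ccost g ω (t + k)) := by
  refine Summable.of_nonneg_of_le
    (fun k => mul_nonneg (pow_nonneg S.hγ0.le _) (S.ccost_nonneg g ω _))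
    (fun k => mul_le_mul_of_nonneg_left (S.ccost_mem g ω _).2 (pow_nonneg S.hγ0.le _)) ?_
  exact (summable_geometric_of_lt_one S.hγ0.le S.hγ1).mul_right _

lemma cCinf_nonneg (g : S.Strat) (ω : ℕ → S.W) (t : ℕ) : 0 ≤ S.cCinf g ω t :=
  tsum_nonneg fun k => mul_nonneg (pow_nonneg S.hγ0.le _) (S.ccost_nonneg g ω _)

lemma cCinf_le_amax (g : S.Strat) (ω : ℕ → S.W) (t : ℕ) : S.cCinf g ω t ≤ S.amax := by
  have h1 : S.cCinf g ω t ≤ ∑' k : ℕ, S.γ ^ k * S.cmax := by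
    refine Summable.tsum_le_tsum (fun k => mul_le_mul_of_nonneg_left (S.ccost_mem g ω _).2
      (pow_nonneg S.hγ0.le _)) (S.summable_cCinf g ω t) ?_
    exact (summable_geometric_of_lt_one S.hγ0.le S.hγ1).mul_right _
  rw [tsum_mul_right, tsum_geometric_of_lt_one S.hγ0.le S.hγ1] at h1
  calc S.cCinf g ω t ≤ (1 - S.γ)⁻¹ * S.cmax := h1
    _ = S.amax := by rw [amax]; ring

lemma cCinf_succ (g : S.Strat) (ω : ℕ → S.W) (t : ℕ) :
    S.cCinf g ω t = S.ccost g ω t + S.γ * S.cCinf g ω (t+1) := by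
  rw [cCinf, Summable.tsum_eq_zero_add (S.summable_cCinf g ω t)]
  congr 1
  · simp
  · rw [cCinf, ← tsum_mul_left]
    apply tsum_congr
    intro k
    have : t + (k + 1) = t + 1 + k := by omega
    rw [this]
    ring

lemma cA_add_cCinf (g : S.Strat) (ω : ℕ → S.W) (t : ℕ) :
    S.cA g ω t + S.γ ^ t * S.cCinf g ω t = S.cCinf g ω 0 := by
  induction t with
  | zero => simp [cA]
  | succ t ih =>
    rw [← ih, cA, Finset.sum_range_succ, ← cA]
    have hrec := S.cCinf_succ g ω t
    have : S.γ ^ (t+1) * S.cCinf g ω (t+1) = S.γ ^ t * (S.γ * S.cCinf g ω (t+1)) := by ring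
    rw [this, hrec]
    ring

lemma val_mem (g : S.Strat) (ω : ℕ → S.W) (t : ℕ) :
    S.cA g ω t + S.γ ^ t * S.cCinf g ω t ∈ Set.Icc 0 S.amax := by
  rw [S.cA_add_cCinf g ω t]
  exact ⟨S.cCinf_nonneg g ω 0, S.cCinf_le_amax g ω 0⟩

lemma cA_eq_oA {g : S.Strat} {ω : ℕ → S.W} {t : ℕ} {m : S.Mem t}
    (h : S.memOf g ω t = m) : S.cA g ω t = S.oA ω t m.2 := by
  rw [cA, oA, Finset.sum_range fun ℓ => S.γ ^ ℓ * S.ccost g ω ℓ]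
  apply Finset.sum_congr rfl
  intro i _
  congr 1
  show S.d _ _ _ = S.d _ _ _
  congr 1
  funext j
  exact S.act_eq h ⟨(j : ℕ), by omega⟩

lemma ccost_eq_oc {g : S.Strat} {ω : ℕ → S.W} {t : ℕ} {m : S.Mem t}
    (h : S.memOf g ω t = m) :
    S.ccost g ω t = S.oc ω t (Fin.snoc m.2 (g t m)) := by
  show S.d _ _ _ = S.d _ _ _
  congr 1
  exact S.actFun_eq h

end Sys
namespace Sys
variable (S : Sys)

/-- The inner function of the `Jopt` recursion. -/
def JF : (n : ℕ) → (t : ℕ) → S.Mem t → S.U → ℝ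
  | 0, t, m, u =>
      sSup ((fun ω => S.oA ω t m.2 + S.γ ^ t * S.oc ω t (Fin.snoc m.2 u)) '' S.consistent t m)
  | (n+1), t, m, u =>
      sSup ((fun ω => S.Jopt n (t+1) (S.omem ω (t+1) (Fin.snoc m.2 u))) '' S.consistent t m)

lemma Jopt_eq (n t : ℕ) (m : S.Mem t) : S.Jopt n t m = sInf (Set.range (S.JF n t m)) := by
  cases n <;> rfl

lemma Jopt_mem_Icc : ∀ (n t : ℕ) (m : S.Mem t), S.Jopt n t m ∈ Set.Icc 0 S.amax ∧
    ∀ u, S.JF n t m u ∈ Set.Icc 0 S.amax := by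
  intro n
  induction n with
  | zero =>
    intro t m
    have hJF : ∀ u, S.JF 0 t m u ∈ Set.Icc 0 S.amax := by
      intro u
      constructor
      · exact Real.sSup_nonneg fun x ⟨ω, hω, hx⟩ => hx ▸ (S.oAoc_mem ω t m.2 _).1
      · exact Real.sSup_le (fun x ⟨ω, hω, hx⟩ => hx ▸ (S.oAoc_mem ω t m.2 _).2) S.amax_nonneg
    refine ⟨?_, hJF⟩
    rw [Jopt_eq]
    constructor
    · exact Real.sInf_nonneg fun x ⟨u, hu⟩ => hu ▸ (hJF u).1
    · refine csInf_le_of_le ⟨0, fun x ⟨u, hu⟩ => hu ▸ (hJF u).1⟩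
        ⟨Classical.arbitrary S.U, rfl⟩ (hJF _).2
  | succ n ih =>
    intro t m
    have hJF : ∀ u, S.JF (n+1) t m u ∈ Set.Icc 0 S.amax := by
      intro u
      constructor
      · exact Real.sSup_nonneg fun x ⟨ω, hω, hx⟩ => hx ▸ (ih (t+1) _).1.1
      · exact Real.sSup_le (fun x ⟨ω, hω, hx⟩ => hx ▸ (ih (t+1) _).1.2) S.amax_nonneg
    refine ⟨?_, hJF⟩
    rw [Jopt_eq]
    constructor
    · exact Real.sInf_nonneg fun x ⟨u, hu⟩ => hu ▸ (hJF u).1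
    · refine csInf_le_of_le ⟨0, fun x ⟨u, hu⟩ => hu ▸ (hJF u).1⟩
        ⟨Classical.arbitrary S.U, rfl⟩ (hJF _).2

lemma bddAbove_val (g : S.Strat) (t : ℕ) (s : Set (ℕ → S.W)) :
    BddAbove ((fun ω => S.cA g ω t + S.γ ^ t * S.cCinf g ω t) '' s) :=
  ⟨S.amax, fun x ⟨ω, _, hx⟩ => hx ▸ (S.val_mem g ω t).2⟩

lemma V_le_amax (g : S.Strat) (t : ℕ) (m : S.Mem t) : S.V g t m ≤ S.amax :=
  Real.sSup_le (fun x ⟨ω, _, hx⟩ => hx ▸ (S.val_mem g ω t).2) S.amax_nonneg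

lemma V_nonneg (g : S.Strat) (t : ℕ) (m : S.Mem t) : 0 ≤ S.V g t m :=
  Real.sSup_nonneg fun x ⟨ω, _, hx⟩ => hx ▸ (S.val_mem g ω t).1

lemma V_succ_le {g : S.Strat} {ω : ℕ → S.W} {t : ℕ} {m : S.Mem t}
    (h : S.memOf g ω t = m) :
    S.V g (t+1) (S.memOf g ω (t+1)) ≤ S.V g t m := by
  apply Real.sSup_le _ (S.V_nonneg g t m)
  rintro x ⟨ω', hω', rfl⟩
  have hω't : S.memOf g ω' t = m := by
    rw [← h]; exact S.memOf_agree hω'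
  have hval : S.cA g ω' (t+1) + S.γ ^ (t+1) * S.cCinf g ω' (t+1)
      = S.cA g ω' t + S.γ ^ t * S.cCinf g ω' t := by
    rw [S.cA_add_cCinf, S.cA_add_cCinf]
  dsimp only
  rw [hval]
  exact le_csSup (S.bddAbove_val g t _) ⟨ω', hω't, rfl⟩

lemma J_le_V : ∀ (n t : ℕ) (m : S.Mem t) (g : S.Strat) (ω₀ : ℕ → S.W),
    S.memOf g ω₀ t = m → S.Jopt n t m ≤ S.V g t m := by
  intro n
  induction n with
  | zero =>
    intro t m g ω₀ h
    rw [Jopt_eq]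
    refine csInf_le_of_le ⟨0, fun x ⟨u, hu⟩ => hu ▸ (S.Jopt_mem_Icc 0 t m).2 u |>.1⟩
      ⟨g t m, rfl⟩ ?_
    apply Real.sSup_le _ (S.V_nonneg g t m)
    rintro x ⟨ω, hω, rfl⟩
    have hωm : S.memOf g ω t = m := S.memOf_of_consistent h hω
    have h1 : S.oA ω t m.2 + S.γ ^ t * S.oc ω t (Fin.snoc m.2 (g t m))
        = S.cA g ω t + S.γ ^ t * S.ccost g ω t := by
      rw [S.cA_eq_oA hωm, S.ccost_eq_oc hωm]
    dsimp only
    rw [h1]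
    have h2 : S.ccost g ω t ≤ S.cCinf g ω t := by
      rw [S.cCinf_succ g ω t]
      nlinarith [S.cCinf_nonneg g ω (t+1), S.hγ0]
    calc S.cA g ω t + S.γ ^ t * S.ccost g ω t
        ≤ S.cA g ω t + S.γ ^ t * S.cCinf g ω t := by
          have := pow_nonneg S.hγ0.le t
          nlinarith
      _ ≤ S.V g t m := le_csSup (S.bddAbove_val g t _) ⟨ω, hωm, rfl⟩
  | succ n ih =>
    intro t m g ω₀ h
    rw [Jopt_eq]
    refine csInf_le_of_le ⟨0, fun x ⟨u, hu⟩ => hu ▸ ((S.Jopt_mem_Icc (n+1) t m).2 u).1⟩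
      ⟨g t m, rfl⟩ ?_
    apply Real.sSup_le _ (S.V_nonneg g t m)
    rintro x ⟨ω, hω, rfl⟩
    have hωm : S.memOf g ω t = m := S.memOf_of_consistent h hω
    have hsucc : S.omem ω (t+1) (Fin.snoc m.2 (g t m)) = S.memOf g ω (t+1) :=
      (S.memOf_succ hωm).symm
    dsimp only
    rw [hsucc]
    exact (ih (t+1) _ g ω rfl).trans (S.V_succ_le hωm)

end Sys
namespace Sys
variable (S : Sys)

lemma exists_greedy (n t : ℕ) (m : S.Mem t) {δ : ℝ} (hδ : 0 < δ) :
    ∃ u : S.U, S.JF n t m u < S.Jopt n t m + δ := by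
  rw [Jopt_eq]
  obtain ⟨a, ⟨u, rfl⟩, ha⟩ := Real.lt_sInf_add_pos
    (Set.range_nonempty (h := ⟨Classical.arbitrary S.U⟩) _) hδ
  exact ⟨u, ha⟩

/-- The `δ`-greedy strategy for horizon `T`. -/
def greedy (T : ℕ) (δ : ℝ) (hδ : 0 < δ) : S.Strat := fun t m =>
  if t ≤ T then Classical.choose (S.exists_greedy (T - t) t m hδ) else Classical.arbitrary S.U

lemma greedy_spec {T t : ℕ} (h : t ≤ T) (m : S.Mem t) {δ : ℝ} (hδ : 0 < δ) :
    S.JF (T - t) t m (S.greedy T δ hδ t m) < S.Jopt (T - t) t m + δ := by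
  have : S.greedy T δ hδ t m = Classical.choose (S.exists_greedy (T - t) t m hδ) := by
    rw [greedy, if_pos h]
  rw [this]
  exact Classical.choose_spec (S.exists_greedy (T - t) t m hδ)

lemma greedy_claim (T : ℕ) {δ : ℝ} (hδ : 0 < δ) :
    ∀ (n t : ℕ) (m : S.Mem t), t + n = T → ∀ ω : ℕ → S.W,
      S.memOf (S.greedy T δ hδ) ω t = m →
      S.cA (S.greedy T δ hδ) ω (T+1) ≤ S.Jopt n t m + (n+1 : ℝ) * δ := by
  set g := S.greedy T δ hδ with hg
  intro n
  induction n with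
  | zero =>
    intro t m ht ω hm
    have htT : t = T := by omega
    subst htT
    have hspec := S.greedy_spec (le_refl t) m hδ
    rw [Nat.sub_self] at hspec
    have h1 : S.cA g ω (t+1) = S.oA ω t m.2 + S.γ ^ t * S.oc ω t (Fin.snoc m.2 (g t m)) := by
      rw [cA, Finset.sum_range_succ, ← cA, S.cA_eq_oA hm, S.ccost_eq_oc hm]
    rw [h1]
    have h2 : S.oA ω t m.2 + S.γ ^ t * S.oc ω t (Fin.snoc m.2 (g t m)) ≤ S.JF 0 t m (g t m) := by
      refine le_csSup ⟨S.amax, ?_⟩ ⟨ω, S.mem_consistent_of_memOf hm, rfl⟩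
      rintro x ⟨ω', _, rfl⟩
      exact (S.oAoc_mem ω' t m.2 _).2
    push_cast
    linarith
  | succ n ih =>
    intro t m ht ω hm
    have htT : t ≤ T := by omega
    have hspec := S.greedy_spec htT m hδ
    have hTt : T - t = n + 1 := by omega
    rw [hTt] at hspec
    have hsucc : S.memOf g ω (t+1) = S.omem ω (t+1) (Fin.snoc m.2 (g t m)) := S.memOf_succ hm
    have hih := ih (t+1) (S.memOf g ω (t+1)) (by omega) ω rfl
    have h2 : S.Jopt n (t+1) (S.memOf g ω (t+1)) ≤ S.JF (n+1) t m (g t m) := by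
      refine le_csSup ⟨S.amax, ?_⟩ ⟨ω, S.mem_consistent_of_memOf hm, ?_⟩
      · rintro x ⟨ω', _, rfl⟩
        exact (S.Jopt_mem_Icc n (t+1) _).1.2
      · dsimp only
        rw [← hsucc]
    push_cast at hih ⊢
    linarith

lemma consistent_zero_eq (g : S.Strat) (m : S.Mem 0) :
    S.consistent 0 m = {ω | S.memOf g ω 0 = m} := by
  ext ω
  exact ⟨fun hω => S.memOf_zero_of_consistent hω, fun hω => S.mem_consistent_of_memOf hω⟩

lemma Jopt_le_Vopt (T : ℕ) (m : S.Mem 0) (hne : (S.consistent 0 m).Nonempty) :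
    S.Jopt T 0 m ≤ S.Vopt 0 m := by
  obtain ⟨ω₀, hω₀⟩ := hne
  apply le_csInf
  · exact ⟨S.V (fun _ _ => Classical.arbitrary S.U) 0 m,
      ⟨fun _ _ => Classical.arbitrary S.U, ⟨ω₀, S.memOf_zero_of_consistent hω₀⟩, rfl⟩⟩
  · rintro b ⟨g, ⟨ω, hω⟩, rfl⟩
    exact S.J_le_V T 0 m g ω hω

lemma Vopt_le_Jopt_add (m : S.Mem 0) (hne : (S.consistent 0 m).Nonempty) (T : ℕ)
    {ε : ℝ} (hε : 0 < ε) :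
    S.Vopt 0 m ≤ S.Jopt T 0 m + S.γ ^ (T+1) * S.amax + ε := by
  obtain ⟨ω₀, hω₀⟩ := hne
  have hδ : 0 < ε / (T+1) := div_pos hε (by positivity)
  set δ := ε / (T+1) with hδdef
  set g := S.greedy T δ hδ with hg
  have h1 : S.Vopt 0 m ≤ S.V g 0 m := by
    refine csInf_le ⟨0, ?_⟩ ⟨g, ⟨ω₀, S.memOf_zero_of_consistent hω₀⟩, rfl⟩
    rintro x ⟨g', _, rfl⟩
    exact S.V_nonneg g' 0 m
  refine h1.trans ?_
  have hrhs : 0 ≤ S.Jopt T 0 m + S.γ ^ (T+1) * S.amax + ε := by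
    have := (S.Jopt_mem_Icc T 0 m).1.1
    have h2 : 0 ≤ S.γ ^ (T+1) * S.amax :=
      mul_nonneg (pow_nonneg S.hγ0.le _) S.amax_nonneg
    linarith
  apply Real.sSup_le _ hrhs
  rintro x ⟨ω, hω, rfl⟩
  dsimp only
  have hval : S.cA g ω 0 + S.γ ^ 0 * S.cCinf g ω 0
      = S.cA g ω (T+1) + S.γ ^ (T+1) * S.cCinf g ω (T+1) := by
    rw [S.cA_add_cCinf, S.cA_add_cCinf]
  rw [hval]
  have hclaim := S.greedy_claim T hδ T 0 m (by omega) ω hω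
  have htail : S.γ ^ (T+1) * S.cCinf g ω (T+1) ≤ S.γ ^ (T+1) * S.amax :=
    mul_le_mul_of_nonneg_left (S.cCinf_le_amax g ω (T+1)) (pow_nonneg S.hγ0.le _)
  have hε' : ((T : ℝ) + 1) * δ = ε := by
    rw [hδdef]
    field_simp
  push_cast at hclaim
  linarith

end Sys
theorem stmt3 (S : Sys) (y0 : S.Y) (hy : (S.consistent 0 (S.mem0 y0)).Nonempty) :
    Filter.Tendsto (fun T : ℕ => S.Jopt T 0 (S.mem0 y0)) Filter.atTop
      (nhds (S.Vopt 0 (S.mem0 y0))) := by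
  set m := S.mem0 y0
  set L := S.Vopt 0 m with hL
  have h1 : ∀ T : ℕ, S.Jopt T 0 m ≤ L := fun T => S.Jopt_le_Vopt T m hy
  have h2 : ∀ T : ℕ, L - S.γ ^ (T+1) * S.amax ≤ S.Jopt T 0 m := by
    intro T
    have : L ≤ S.Jopt T 0 m + S.γ ^ (T+1) * S.amax := by
      by_contra hcon
      push_neg at hcon
      have hε : 0 < (L - (S.Jopt T 0 m + S.γ ^ (T+1) * S.amax)) / 2 := by linarith
      have := S.Vopt_le_Jopt_add m hy T hε
      rw [← hL] at this
      linarith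
    linarith
  have hpow : Filter.Tendsto (fun T : ℕ => S.γ ^ (T+1)) Filter.atTop (nhds 0) := by
    have h := tendsto_pow_atTop_nhds_zero_of_lt_one S.hγ0.le S.hγ1
    exact h.comp (Filter.tendsto_add_atTop_nat 1)
  have hlow : Filter.Tendsto (fun T : ℕ => L - S.γ ^ (T+1) * S.amax) Filter.atTop (nhds L) := by
    have := Filter.Tendsto.sub (tendsto_const_nhds (x := L) (f := Filter.atTop (α := ℕ)))
      (hpow.mul_const S.amax)
    simpa using this
  exact tendsto_of_tendsto_of_tendsto_of_le_of_le hlow tendsto_const_nhds h2 h1
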